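/- (Covariance-matched split Gibbs is exact.) Let n, m ≥ 1, let H be a real m×n matrix, let ρ > 0, and let Σ_η be a positive definite symmetric real m×m matrix such that Σ_split := Σ_η − ρ² H Hᵀ is positive definite. Then for all x ∈ ℝⁿ and y ∈ ℝᵐ, ∫_{ℝⁿ} g_m(y; H z, Σ_split) · g_n(z; x, ρ² I_n) dz = g_m(y; H x, Σ_η). Consequently, for any prior density p : ℝⁿ → [0, ∞), the function x ↦ p(x) · ∫_{ℝⁿ} g_m(y; H z, Σ_split) · g_n(z; x, ρ² I_n) dz equals p(x) · g_m(y; H x, Σ_η), the exact posterior kernel, for every admissible ρ, without requiring ρ → 0. -/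

import Mathlib

/-! Given `x`, the observation `y = H z + ε` with independent `z ~ N(x, T)` and `ε ~ N(0, S)` is
distributed as `N(H x, S + H T Hᵀ)`. Concretely, completing the square in `z` factors the product of
the two densities as `g(y; H x, S + H T Hᵀ) · g(z; μ, M⁻¹)` with `M = Hᵀ S⁻¹ H + T⁻¹`: the Woodbury
identity identifies the leftover quadratic form in `y - H x` and the matrix determinant lemma the
normalising constants. Integrating out `z` leaves `g(y; H x, S + H T Hᵀ)`, and for `T = ρ² I` the
matched choice `S = Σ_η - ρ² H Hᵀ` makes this covariance exactly `Σ_η`. -/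

open MeasureTheory Matrix

/-- The Gaussian density on `ℝᵈ` with mean `m` and covariance matrix `S`:
`g_d(x; m, S) = ((2π)^d det S)^(−1/2) · exp(−(1/2)⟨x − m, S⁻¹(x − m)⟩)`. -/
noncomputable def gaussDensity (d : ℕ) (m : Fin d → ℝ) (S : Matrix (Fin d) (Fin d) ℝ)
    (x : Fin d → ℝ) : ℝ :=
  ((2 * Real.pi) ^ d * S.det) ^ (-(1 : ℝ) / 2) *
    Real.exp (-(1 / 2) * ((x - m) ⬝ᵥ S⁻¹.mulVec (x - m)))

namespace Matrix

variable {ι κ R : Type*}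

lemma PosDef.isSymm {A : Matrix ι ι ℝ} (hA : A.PosDef) : A.IsSymm :=
  isHermitian_iff_isSymm.mp hA.isHermitian

variable [Fintype ι] [Fintype κ]

section CommSemiring

variable [CommSemiring R]

lemma mulVec_dotProduct_eq_dotProduct_transpose_mulVec (H : Matrix κ ι R) (w : ι → R)
    (v : κ → R) : H *ᵥ w ⬝ᵥ v = w ⬝ᵥ Hᵀ *ᵥ v := by
  rw [dotProduct_comm, dotProduct_mulVec, mulVec_transpose, dotProduct_comm]

lemma IsSymm.dotProduct_mulVec_comm {A : Matrix ι ι R} (hA : A.IsSymm) (u v : ι → R) :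
    u ⬝ᵥ A *ᵥ v = v ⬝ᵥ A *ᵥ u := by
  rw [dotProduct_comm, mulVec_dotProduct_eq_dotProduct_transpose_mulVec, hA.eq]

end CommSemiring

section CommRing

variable [CommRing R] [DecidableEq ι]

lemma quadForm_sub_mulVec_add_quadForm {A : Matrix κ κ R} (hA : A.IsSymm)
    {D : Matrix ι ι R} (hD : D.IsSymm) (H : Matrix κ ι R) (hM : IsUnit (Hᵀ * A * H + D))
    (u : κ → R) (w : ι → R) :
    (u - H *ᵥ w) ⬝ᵥ A *ᵥ (u - H *ᵥ w) + w ⬝ᵥ D *ᵥ w =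
      (w - (Hᵀ * A * H + D)⁻¹ *ᵥ (Hᵀ * A) *ᵥ u) ⬝ᵥ (Hᵀ * A * H + D) *ᵥ
          (w - (Hᵀ * A * H + D)⁻¹ *ᵥ (Hᵀ * A) *ᵥ u) +
        u ⬝ᵥ (A - A * H * (Hᵀ * A * H + D)⁻¹ * Hᵀ * A) *ᵥ u := by
  set M := Hᵀ * A * H + D with hM_def
  set p := (Hᵀ * A) *ᵥ u
  set v := M⁻¹ *ᵥ p
  have hMs : M.IsSymm := by
    refine IsSymm.add ?_ hD
    simp only [IsSymm, transpose_mul, transpose_transpose, hA.eq, Matrix.mul_assoc]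
  have hMv : M *ᵥ v = p := by
    rw [mulVec_mulVec, mul_nonsing_inv _ ((isUnit_iff_isUnit_det M).mp hM), one_mulVec]
  have huHw : u ⬝ᵥ A *ᵥ H *ᵥ w = w ⬝ᵥ p := by
    rw [hA.dotProduct_mulVec_comm, mulVec_dotProduct_eq_dotProduct_transpose_mulVec,
      mulVec_mulVec]
  have hHwu : H *ᵥ w ⬝ᵥ A *ᵥ u = w ⬝ᵥ p := by
    rw [mulVec_dotProduct_eq_dotProduct_transpose_mulVec, mulVec_mulVec]
  have hwMw : w ⬝ᵥ M *ᵥ w = H *ᵥ w ⬝ᵥ A *ᵥ H *ᵥ w + w ⬝ᵥ D *ᵥ w := by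
    rw [mulVec_dotProduct_eq_dotProduct_transpose_mulVec, mulVec_mulVec, mulVec_mulVec,
      ← dotProduct_add, ← add_mulVec, Matrix.mul_assoc, hM_def, Matrix.mul_assoc]
  have hvMw : v ⬝ᵥ M *ᵥ w = w ⬝ᵥ p := by rw [hMs.dotProduct_mulVec_comm, hMv]
  have hcorr : u ⬝ᵥ (A * H * M⁻¹ * Hᵀ * A) *ᵥ u = v ⬝ᵥ p := by
    have : A * H * M⁻¹ * Hᵀ * A = (Hᵀ * A)ᵀ * (M⁻¹ * (Hᵀ * A)) := by
      simp only [transpose_mul, transpose_transpose, hA.eq, Matrix.mul_assoc]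
    rw [this, ← mulVec_mulVec, ← mulVec_mulVec,
      ← mulVec_dotProduct_eq_dotProduct_transpose_mulVec, dotProduct_comm]
  rw [sub_mulVec, dotProduct_sub, hcorr]
  simp only [mulVec_sub, dotProduct_sub, sub_dotProduct, huHw, hHwu, hwMw, hvMw, hMv]
  rw [dotProduct_comm v p]
  ring

variable [DecidableEq κ]

lemma det_add_mul_mul_transpose {S : Matrix κ κ R} {T : Matrix ι ι R} (hS : IsUnit S.det)
    (hT : IsUnit T.det) (H : Matrix κ ι R) :
    (S + H * T * Hᵀ).det = S.det * T.det * (Hᵀ * S⁻¹ * H + T⁻¹).det := by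
  have h : 1 + Hᵀ * S⁻¹ * H * T = (Hᵀ * S⁻¹ * H + T⁻¹) * T := by
    rw [Matrix.add_mul, nonsing_inv_mul T hT, add_comm]
  rw [det_add_mul (H * T) Hᵀ hS, ← Matrix.mul_assoc, h, det_mul]
  ring

lemma inv_add_mul_mul_transpose {S : Matrix κ κ R} {T : Matrix ι ι R} (hS : IsUnit S)
    (hT : IsUnit T) (H : Matrix κ ι R) (hM : IsUnit (Hᵀ * S⁻¹ * H + T⁻¹)) :
    (S + H * T * Hᵀ)⁻¹ = S⁻¹ - S⁻¹ * H * (Hᵀ * S⁻¹ * H + T⁻¹)⁻¹ * Hᵀ * S⁻¹ := by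
  rw [add_comm _ T⁻¹] at hM ⊢
  exact add_mul_mul_inv_eq_sub S H T Hᵀ hS hT hM

end CommRing

lemma posDef_transpose_mul_mul_add {A : Matrix κ κ ℝ} {D : Matrix ι ι ℝ} (hA : A.PosSemidef)
    (hD : D.PosDef) (H : Matrix κ ι ℝ) : (Hᵀ * A * H + D).PosDef := by
  have h := hA.conjTranspose_mul_mul_same H
  rw [conjTranspose_eq_transpose_of_trivial] at h
  exact PosDef.posSemidef_add h hD

end Matrix

section GaussianIntegral

variable {ι : Type*} [Fintype ι]

lemma integral_exp_neg_half_dotProduct_self :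
    ∫ w : ι → ℝ, Real.exp (-(1 / 2) * (w ⬝ᵥ w)) = Real.sqrt (2 * Real.pi) ^ Fintype.card ι := by
  have h1 : ∫ v : ℝ, Real.exp (-(1 / 2) * v ^ 2) = Real.sqrt (2 * Real.pi) := by
    rw [integral_gaussian]; congr 1; field_simp
  simp only [dotProduct, Finset.mul_sum, Real.exp_sum, ← sq]
  rw [integral_fintype_prod_volume_eq_prod (fun _ v => Real.exp (-(1 / 2) * v ^ 2)), h1,
    Finset.prod_const, Finset.card_univ]

variable [DecidableEq ι]

lemma integral_comp_mulVec {A : Matrix ι ι ℝ} (hA : A.det ≠ 0) (f : (ι → ℝ) → ℝ) :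
    ∫ z, f (A *ᵥ z) = |A.det|⁻¹ * ∫ z, f z := by
  have hdet : LinearMap.det (toLin' A) ≠ 0 := by rwa [LinearMap.det_toLin']
  have hemb : MeasurableEmbedding (toLin' A) :=
    ((toLin' A).equivOfDetNeZero hdet).toContinuousLinearEquiv.toHomeomorph.measurableEmbedding
  rw [← LinearMap.det_toLin' A, ← abs_inv, ← ENNReal.toReal_ofReal (abs_nonneg _), ← smul_eq_mul,
    ← integral_smul_measure, ← Real.map_linearMap_volume_pi_eq_smul_volume_pi hdet,
    hemb.integral_map]
  rfl

open scoped MatrixOrder in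
lemma integral_exp_neg_half_quadForm_inv {S : Matrix ι ι ℝ} (hS : S.PosDef) :
    ∫ z : ι → ℝ, Real.exp (-(1 / 2) * (z ⬝ᵥ S⁻¹ *ᵥ z)) =
      Real.sqrt ((2 * Real.pi) ^ Fintype.card ι * S.det) := by
  -- With `S = Bᵀ B`, the substitution `z = Bᵀ w` turns the form into `w ⬝ᵥ w`.
  obtain ⟨B, hB⟩ := CStarAlgebra.nonneg_iff_eq_star_mul_self.mp hS.posSemidef.nonneg
  rw [star_eq_conjTranspose, conjTranspose_eq_transpose_of_trivial] at hB
  have hdetS : S.det = B.det ^ 2 := by rw [hB, det_mul, det_transpose, sq]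
  have hB0 : B.det ≠ 0 := by
    intro h; have := hS.det_pos; rw [hdetS, h] at this; norm_num at this
  have hquad (w : ι → ℝ) : Bᵀ *ᵥ w ⬝ᵥ S⁻¹ *ᵥ Bᵀ *ᵥ w = w ⬝ᵥ w := by
    rw [mulVec_dotProduct_eq_dotProduct_transpose_mulVec, mulVec_mulVec, mulVec_mulVec, hB,
      Matrix.mul_inv_rev, transpose_transpose, ← Matrix.mul_assoc,
      mul_nonsing_inv B (isUnit_iff_ne_zero.mpr hB0), Matrix.one_mul,
      nonsing_inv_mul _ (by rwa [det_transpose, isUnit_iff_ne_zero]), one_mulVec]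
  have hcv := integral_comp_mulVec (A := Bᵀ) (by rwa [det_transpose])
    (fun z => Real.exp (-(1 / 2) * (z ⬝ᵥ S⁻¹ *ᵥ z)))
  simp only [hquad, integral_exp_neg_half_dotProduct_self, det_transpose] at hcv
  have hpow : Real.sqrt (2 * Real.pi) ^ Fintype.card ι =
      Real.sqrt ((2 * Real.pi) ^ Fintype.card ι) := by
    rw [Real.sqrt_eq_rpow, Real.sqrt_eq_rpow, ← Real.rpow_mul_natCast (by positivity),
      ← Real.rpow_natCast, ← Real.rpow_mul (by positivity)]
    ring_nf
  rw [Real.sqrt_mul (by positivity), ← hpow, hcv, hdetS, Real.sqrt_sq_eq_abs,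
    mul_comm, mul_inv_cancel_left₀ (abs_ne_zero.mpr hB0)]

end GaussianIntegral

lemma integral_gaussDensity {d : ℕ} {S : Matrix (Fin d) (Fin d) ℝ} (hS : S.PosDef)
    (c : Fin d → ℝ) : ∫ z, gaussDensity d c S z = 1 := by
  have hpos : 0 < (2 * Real.pi) ^ d * S.det := by have := hS.det_pos; positivity
  simp only [gaussDensity]
  rw [integral_const_mul,
    integral_sub_right_eq_self (fun z => Real.exp (-(1 / 2) * (z ⬝ᵥ S⁻¹ *ᵥ z))) c,
    integral_exp_neg_half_quadForm_inv hS, Fintype.card_fin, Real.sqrt_eq_rpow,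
    ← Real.rpow_add hpos]
  norm_num

lemma gaussDensity_mul_gaussDensity {m n : ℕ} {S : Matrix (Fin m) (Fin m) ℝ}
    {T : Matrix (Fin n) (Fin n) ℝ} (hS : S.PosDef) (hT : T.PosDef) (H : Matrix (Fin m) (Fin n) ℝ)
    (x z : Fin n → ℝ) (y : Fin m → ℝ) :
    gaussDensity m (H *ᵥ z) S y * gaussDensity n x T z =
      gaussDensity m (H *ᵥ x) (S + H * T * Hᵀ) y *
        gaussDensity n (x + (Hᵀ * S⁻¹ * H + T⁻¹)⁻¹ *ᵥ (Hᵀ * S⁻¹) *ᵥ (y - H *ᵥ x))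
          (Hᵀ * S⁻¹ * H + T⁻¹)⁻¹ z := by
  set M := Hᵀ * S⁻¹ * H + T⁻¹
  have hM : M.PosDef := posDef_transpose_mul_mul_add hS.inv.posSemidef hT.inv H
  have hS0 := hS.det_pos
  have hT0 := hT.det_pos
  have hM0 := hM.det_pos
  have hconst : ((2 * Real.pi) ^ m * S.det) ^ (-(1 : ℝ) / 2) *
        ((2 * Real.pi) ^ n * T.det) ^ (-(1 : ℝ) / 2) =
      ((2 * Real.pi) ^ m * (S + H * T * Hᵀ).det) ^ (-(1 : ℝ) / 2) *
        ((2 * Real.pi) ^ n * M⁻¹.det) ^ (-(1 : ℝ) / 2) := by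
    rw [det_add_mul_mul_transpose hS0.ne'.isUnit hT0.ne'.isUnit H, det_nonsing_inv,
      Ring.inverse_eq_inv', ← Real.mul_rpow (by positivity) (by positivity),
      ← Real.mul_rpow (by positivity) (by positivity)]
    congr 1
    field_simp
    rfl
  have hexp : (y - H *ᵥ z) ⬝ᵥ S⁻¹ *ᵥ (y - H *ᵥ z) + (z - x) ⬝ᵥ T⁻¹ *ᵥ (z - x) =
      (y - H *ᵥ x) ⬝ᵥ (S + H * T * Hᵀ)⁻¹ *ᵥ (y - H *ᵥ x) +
        (z - (x + M⁻¹ *ᵥ (Hᵀ * S⁻¹) *ᵥ (y - H *ᵥ x))) ⬝ᵥ M⁻¹⁻¹ *ᵥ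
          (z - (x + M⁻¹ *ᵥ (Hᵀ * S⁻¹) *ᵥ (y - H *ᵥ x))) := by
    have h := quadForm_sub_mulVec_add_quadForm hS.inv.isSymm hT.inv.isSymm H hM.isUnit
      (y - H *ᵥ x) (z - x)
    rw [mulVec_sub, sub_sub_sub_cancel_right] at h
    rw [h, inv_add_mul_mul_transpose hS.isUnit hT.isUnit H hM.isUnit,
      nonsing_inv_nonsing_inv M hM0.ne'.isUnit, sub_sub, add_comm]
  simp only [gaussDensity]
  rw [mul_mul_mul_comm, ← Real.exp_add, ← mul_add, hexp, hconst, mul_add, Real.exp_add,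
    mul_mul_mul_comm]

theorem integral_gaussDensity_mul_gaussDensity {m n : ℕ} {S : Matrix (Fin m) (Fin m) ℝ}
    {T : Matrix (Fin n) (Fin n) ℝ} (hS : S.PosDef) (hT : T.PosDef) (H : Matrix (Fin m) (Fin n) ℝ)
    (x : Fin n → ℝ) (y : Fin m → ℝ) :
    ∫ z, gaussDensity m (H *ᵥ z) S y * gaussDensity n x T z =
      gaussDensity m (H *ᵥ x) (S + H * T * Hᵀ) y := by
  simp_rw [gaussDensity_mul_gaussDensity hS hT]
  rw [integral_const_mul,
    integral_gaussDensity (posDef_transpose_mul_mul_add hS.inv.posSemidef hT.inv H).inv, mul_one]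

theorem matched_split_gibbs_exact_general (n m : ℕ)
    (H : Matrix (Fin m) (Fin n) ℝ) (ρ : ℝ) (hρ : 0 < ρ)
    (Sη : Matrix (Fin m) (Fin m) ℝ)
    (hSplit : (Sη - ρ ^ 2 • (H * Hᵀ)).PosDef) :
    (∀ (x : Fin n → ℝ) (y : Fin m → ℝ),
        ∫ z : Fin n → ℝ,
            gaussDensity m (H.mulVec z) (Sη - ρ ^ 2 • (H * Hᵀ)) y
              * gaussDensity n x (ρ ^ 2 • (1 : Matrix (Fin n) (Fin n) ℝ)) z
          = gaussDensity m (H.mulVec x) Sη y)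
    ∧ ∀ (p : (Fin n → ℝ) → ℝ), (∀ x, 0 ≤ p x) →
        ∀ (x : Fin n → ℝ) (y : Fin m → ℝ),
          p x * ∫ z : Fin n → ℝ,
              gaussDensity m (H.mulVec z) (Sη - ρ ^ 2 • (H * Hᵀ)) y
                * gaussDensity n x (ρ ^ 2 • (1 : Matrix (Fin n) (Fin n) ℝ)) z
            = p x * gaussDensity m (H.mulVec x) Sη y := by
  have hcoupling : (ρ ^ 2 • (1 : Matrix (Fin n) (Fin n) ℝ)).PosDef :=
    PosDef.one.smul (by positivity)
  have hcov : Sη - ρ ^ 2 • (H * Hᵀ) + H * (ρ ^ 2 • (1 : Matrix (Fin n) (Fin n) ℝ)) * Hᵀ = Sη := by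
    rw [Matrix.mul_smul, Matrix.mul_one, Matrix.smul_mul, sub_add_cancel]
  have marginal (x : Fin n → ℝ) (y : Fin m → ℝ) :
      ∫ z, gaussDensity m (H *ᵥ z) (Sη - ρ ^ 2 • (H * Hᵀ)) y
          * gaussDensity n x (ρ ^ 2 • (1 : Matrix (Fin n) (Fin n) ℝ)) z =
        gaussDensity m (H *ᵥ x) Sη y := by
    rw [integral_gaussDensity_mul_gaussDensity hSplit hcoupling, hcov]
  exact ⟨marginal, fun p _ x y => by rw [marginal]⟩

/-- Covariance-matched split Gibbs is exact: with `Σ_split = Σ_η − ρ² H Hᵀ` positive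
definite, `∫ g_m(y; H z, Σ_split) g_n(z; x, ρ² Iₙ) dz = g_m(y; H x, Σ_η)` for all `x, y`;
consequently for any nonnegative prior density `p`, the split Gibbs kernel
`p(x) · ∫ g_m(y; H z, Σ_split) g_n(z; x, ρ² Iₙ) dz` equals the exact posterior kernel
`p(x) · g_m(y; H x, Σ_η)`. -/
theorem matched_split_gibbs_exact (n m : ℕ) (hn : 1 ≤ n) (hm : 1 ≤ m)
    (H : Matrix (Fin m) (Fin n) ℝ) (ρ : ℝ) (hρ : 0 < ρ)
    (Sη : Matrix (Fin m) (Fin m) ℝ) (hSη : Sη.PosDef)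
    (hSplit : (Sη - ρ ^ 2 • (H * Hᵀ)).PosDef) :
    (∀ (x : Fin n → ℝ) (y : Fin m → ℝ),
        ∫ z : Fin n → ℝ,
            gaussDensity m (H.mulVec z) (Sη - ρ ^ 2 • (H * Hᵀ)) y
              * gaussDensity n x (ρ ^ 2 • (1 : Matrix (Fin n) (Fin n) ℝ)) z
          = gaussDensity m (H.mulVec x) Sη y)
    ∧ ∀ (p : (Fin n → ℝ) → ℝ), (∀ x, 0 ≤ p x) →
        ∀ (x : Fin n → ℝ) (y : Fin m → ℝ),
          p x * ∫ z : Fin n → ℝ,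
              gaussDensity m (H.mulVec z) (Sη - ρ ^ 2 • (H * Hᵀ)) y
                * gaussDensity n x (ρ ^ 2 • (1 : Matrix (Fin n) (Fin n) ℝ)) z
            = p x * gaussDensity m (H.mulVec x) Sη y :=
  matched_split_gibbs_exact_general n m H ρ hρ Sη hSplit
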